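/- There exists a constant M > 0 such that for every bounded continuous function f : [0,∞) → ℝ, every positive integer n, every real α with 0 < α ≤ 1/n and every real x ≥ 0: |U_n^[α](f; x) − f(x)| ≤ M·ω₂(f; √(ρ_n(x))) + ω(f; 1/n), where ρ_n(x) = Θ_{n,2}^[α](x) + 1/n². -/

import Mathlib

open MeasureTheory Filter

noncomputable section

/-- The Szász basis function `e^(-nu) (nu)^i / i!`. -/
def szaszBasis (n i : ℕ) (u : ℝ) : ℝ :=
  Real.exp (-(n : ℝ) * u) * ((n : ℝ) * u) ^ i / (Nat.factorial i : ℝ)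

/-- The rising factorial `x^(i,-α) = ∏_{j=0}^{i-1} (x + jα)` with increment `α`. -/
def risingFac (x α : ℝ) (i : ℕ) : ℝ :=
  ∏ j ∈ Finset.range i, (x + (j : ℝ) * α)

/-- The Durrmeyer modification of the generalized Szász-Mirakjan operators:
`U_n^[α](f; x) = n Σ_i (1+nα)^(−x/α) (α+1/n)^(−i) x^(i,−α)/i! ∫_0^∞ e^(−nu)(nu)^i/i! f(u) du`. -/
def U (n : ℕ) (α : ℝ) (f : ℝ → ℝ) (x : ℝ) : ℝ :=
  (n : ℝ) * ∑' i : ℕ,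
    (1 + (n : ℝ) * α) ^ (-x / α) * (α + 1 / (n : ℝ)) ^ (-(i : ℤ)) *
      (risingFac x α i / (Nat.factorial i : ℝ)) *
      ∫ u in Set.Ioi (0 : ℝ), szaszBasis n i u * f u

/-- The `m`-th central moment `Θ_{n,m}^[α](x) = U_n^[α]((t−x)^m; x)`. -/
def theta (n : ℕ) (α : ℝ) (m : ℕ) (x : ℝ) : ℝ :=
  U n α (fun t => (t - x) ^ m) x

end

noncomputable section

/-- First-order modulus of continuity on `[0,∞)`. -/
def omega1 (f : ℝ → ℝ) (δ : ℝ) : ℝ :=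
  sSup {y | ∃ x h : ℝ, 0 ≤ x ∧ 0 ≤ h ∧ h ≤ δ ∧ y = |f (x + h) - f x|}

/-- Second-order modulus of smoothness on `[0,∞)`. -/
def omega2 (f : ℝ → ℝ) (δ : ℝ) : ℝ :=
  sSup {y | ∃ x h : ℝ, 0 ≤ x ∧ 0 ≤ h ∧ h ≤ δ ∧ y = |f (x + 2 * h) - 2 * f (x + h) + f x|}

end

/-!
`U n α · x` is a positive linear functional: `U n α f x = n ∑ᵢ wᵢ ∫ pᵢ f` with weights `wᵢ ≥ 0`
which, by the binomial series of `(1 - α t) ^ (-x / α)`, sum to `1` and have mean `n x`; hence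
`U` reproduces constants and maps `t - x` to `1 / n`. Replace `f` by its double Steklov mean `g`
of step `δ = √(Θ₂ + 1 / n²)`, so that `|f - g| ≤ ω₂(f, δ)` and `|g''| ≤ 9 ω₂(f, δ) / δ²` on
`[0, ∞)`. Taylor's formula gives `|U f - g x - g' x / n| ≤ ω₂(f, δ) + ‖g''‖ Θ₂`, and `g' x / n`
differs from `f (x + 1/n) - f x` by at most `‖g''‖ / n² + 2 ω₂(f, δ)`. Since `δ² = Θ₂ + 1 / n²`
everything adds up to `13 ω₂(f, δ) + ω(f, 1 / n)`.
-/

open Set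
open scoped Nat

theorem risingFac_succ (x α : ℝ) (i : ℕ) :
    risingFac x α (i + 1) = x * risingFac (x + α) α i := by
  simp only [risingFac, Finset.prod_range_succ', Nat.cast_add, Nat.cast_one, Nat.cast_zero,
    zero_mul, add_zero]
  rw [mul_comm]
  congr 1
  exact Finset.prod_congr rfl fun j _ => by ring

theorem risingFac_nonneg {x α : ℝ} (hx : 0 ≤ x) (hα : 0 ≤ α) (i : ℕ) : 0 ≤ risingFac x α i :=
  Finset.prod_nonneg fun _ _ => by positivity

theorem factorial_mul_choose_eq_prod (z : ℝ) (i : ℕ) :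
    (i ! : ℝ) * Ring.choose (z + i - 1) i = ∏ j ∈ Finset.range i, (z + j) := by
  rw [← Ring.multichoose_eq, ← nsmul_eq_mul, Ring.factorial_nsmul_multichoose_eq_ascPochhammer,
    Polynomial.ascPochhammer_smeval_eq_eval]
  induction i with
  | zero => simp
  | succ i ih =>
    rw [ascPochhammer_succ_right, Polynomial.eval_mul, ih, Finset.prod_range_succ]
    simp

theorem risingFac_eq_pow_mul_prod {α : ℝ} (hα : α ≠ 0) (x : ℝ) (i : ℕ) :
    risingFac x α i = α ^ i * ∏ j ∈ Finset.range i, (x / α + j) := by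
  calc risingFac x α i = ∏ j ∈ Finset.range i, α * (x / α + j) :=
        Finset.prod_congr rfl fun j _ => by field_simp
    _ = _ := by rw [Finset.prod_mul_distrib, Finset.prod_const, Finset.card_range]

theorem hasSum_risingFac_mul_pow_div_factorial {α t : ℝ} (hα : α ≠ 0) (ht : |α * t| < 1)
    (x : ℝ) :
    HasSum (fun i => risingFac x α i * t ^ i / i !) ((1 - α * t) ^ (-(x / α))) := by
  have h := (Real.one_div_one_sub_rpow_hasFPowerSeriesOnBall_zero (x / α)).hasSum
    (y := α * t) (by
      rwa [← ENNReal.ofReal_one, Metric.eball_ofReal, Metric.mem_ball, dist_zero_right])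
  simp only [FormalMultilinearSeries.ofScalars_apply_eq, smul_eq_mul, zero_add] at h
  rw [Real.rpow_neg (by linarith [le_abs_self (α * t)]), ← one_div]
  refine h.congr_fun fun i => ?_
  rw [risingFac_eq_pow_mul_prod hα, ← factorial_mul_choose_eq_prod]
  field_simp
  ring

theorem succ_mul_risingFac_mul_pow_div_factorial (x α t : ℝ) (i : ℕ) :
    ((i : ℝ) + 1) * (risingFac x α (i + 1) * t ^ (i + 1) / (i + 1)!) =
      x * t * (risingFac (x + α) α i * t ^ i / i !) := by
  rw [risingFac_succ, Nat.factorial_succ, pow_succ]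
  push_cast
  field_simp

theorem hasSum_nat_mul_risingFac_mul_pow_div_factorial {α t : ℝ} (hα : α ≠ 0)
    (ht : |α * t| < 1) (x : ℝ) :
    HasSum (fun i : ℕ => i * (risingFac x α i * t ^ i / i !))
      (x * t * (1 - α * t) ^ (-((x + α) / α))) := by
  rw [← hasSum_nat_add_iff' 1]
  simpa [succ_mul_risingFac_mul_pow_div_factorial] using
    ((hasSum_risingFac_mul_pow_div_factorial hα ht (x + α)).mul_left (x * t))

theorem summable_sq_mul_risingFac_mul_pow_div_factorial {α t : ℝ} (hα : α ≠ 0)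
    (ht : |α * t| < 1) (x : ℝ) :
    Summable (fun i : ℕ => (i : ℝ) ^ 2 * (risingFac x α i * t ^ i / i !)) := by
  rw [← summable_nat_add_iff 1]
  have hs := (hasSum_nat_mul_risingFac_mul_pow_div_factorial hα ht (x + α)).summable.add
    (hasSum_risingFac_mul_pow_div_factorial hα ht (x + α)).summable
  refine (hs.mul_left (x * t)).congr fun i => ?_
  push_cast
  rw [sq, mul_assoc ((i : ℝ) + 1), succ_mul_risingFac_mul_pow_div_factorial]
  ring

noncomputable def durrmeyerWeight (n : ℕ) (α x : ℝ) (i : ℕ) : ℝ :=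
  (1 + (n : ℝ) * α) ^ (-x / α) * (α + 1 / (n : ℝ)) ^ (-(i : ℤ)) *
    (risingFac x α i / (Nat.factorial i : ℝ))

theorem U_eq_tsum (n : ℕ) (α : ℝ) (f : ℝ → ℝ) (x : ℝ) :
    U n α f x = n * ∑' i, durrmeyerWeight n α x i * ∫ u in Ioi 0, szaszBasis n i u * f u :=
  rfl

section Weights

variable {n : ℕ} {α : ℝ}

theorem durrmeyerWeight_eq (n : ℕ) (α x : ℝ) (i : ℕ) :
    durrmeyerWeight n α x i =
      (1 + n * α) ^ (-x / α) * (risingFac x α i * (α + 1 / n)⁻¹ ^ i / i !) := by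
  rw [durrmeyerWeight, zpow_neg, zpow_natCast, inv_pow]
  ring

theorem durrmeyerWeight_nonneg (hα : 0 ≤ α) {x : ℝ} (hx : 0 ≤ x) (i : ℕ) :
    0 ≤ durrmeyerWeight n α x i := by
  have := risingFac_nonneg hx hα i
  rw [durrmeyerWeight_eq]
  positivity

theorem one_sub_mul_inv_add_one_div (hn : 0 < n) (hα : 0 ≤ α) :
    1 - α * (α + 1 / n)⁻¹ = (1 + n * α)⁻¹ := by
  have : (0 : ℝ) < n := by exact_mod_cast hn
  field_simp
  ring

theorem abs_mul_inv_add_one_div_lt_one (hn : 0 < n) (hα : 0 ≤ α) :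
    |α * (α + 1 / n)⁻¹| < 1 := by
  have h : α * (α + 1 / n)⁻¹ = 1 - (1 + n * α)⁻¹ := by
    rw [← one_sub_mul_inv_add_one_div hn hα, sub_sub_cancel]
  have hpos : 0 < (1 + n * α : ℝ)⁻¹ := by positivity
  have hle : (1 + n * α : ℝ)⁻¹ ≤ 1 := inv_le_one_of_one_le₀ (by nlinarith [n.cast_nonneg (α := ℝ)])
  rw [h, abs_lt]
  constructor <;> linarith

theorem hasSum_durrmeyerWeight (hn : 0 < n) (hα : 0 < α) (x : ℝ) :
    HasSum (durrmeyerWeight n α x) 1 := by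
  have hβ : (0 : ℝ) < 1 + n * α := by positivity
  have h := (hasSum_risingFac_mul_pow_div_factorial hα.ne'
    (abs_mul_inv_add_one_div_lt_one hn hα.le) x).mul_left ((1 + n * α) ^ (-x / α))
  have hval : (1 + n * α) ^ (-x / α) * (1 - α * (α + 1 / n)⁻¹) ^ (-(x / α)) = 1 := by
    rw [one_sub_mul_inv_add_one_div hn hα.le, Real.inv_rpow hβ.le, ← Real.rpow_neg hβ.le,
      ← Real.rpow_add hβ, neg_div, neg_neg, neg_add_cancel, Real.rpow_zero]
  rw [hval] at h
  exact h.congr_fun (durrmeyerWeight_eq n α x)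

theorem hasSum_nat_mul_durrmeyerWeight (hn : 0 < n) (hα : 0 < α) (x : ℝ) :
    HasSum (fun i : ℕ => i * durrmeyerWeight n α x i) (n * x) := by
  have hβ : (0 : ℝ) < 1 + n * α := by positivity
  have h := (hasSum_nat_mul_risingFac_mul_pow_div_factorial hα.ne'
    (abs_mul_inv_add_one_div_lt_one hn hα.le) x).mul_left ((1 + n * α) ^ (-x / α))
  have hN : (0 : ℝ) < n := by exact_mod_cast hn
  have hval : (1 + n * α) ^ (-x / α) *
      (x * (α + 1 / n)⁻¹ * (1 - α * (α + 1 / n)⁻¹) ^ (-((x + α) / α))) = n * x := by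
    rw [one_sub_mul_inv_add_one_div hn hα.le, Real.inv_rpow hβ.le, ← Real.rpow_neg hβ.le, neg_neg,
      add_div, div_self hα.ne', Real.rpow_add hβ, Real.rpow_one]
    calc _ = ((1 + n * α) ^ (-x / α) * (1 + n * α) ^ (x / α)) * (x * (α + 1 / n)⁻¹ * (1 + n * α))
          := by ring
      _ = n * x := by
        rw [← Real.rpow_add hβ, neg_div, neg_add_cancel, Real.rpow_zero, one_mul]
        field_simp
        ring
  rw [hval] at h
  exact h.congr_fun fun i => by rw [durrmeyerWeight_eq]; ring

theorem summable_sq_mul_durrmeyerWeight (hn : 0 < n) (hα : 0 < α) (x : ℝ) :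
    Summable (fun i : ℕ => (i : ℝ) ^ 2 * durrmeyerWeight n α x i) := by
  refine ((summable_sq_mul_risingFac_mul_pow_div_factorial hα.ne'
    (abs_mul_inv_add_one_div_lt_one hn hα.le) x).mul_left ((1 + n * α) ^ (-x / α))).congr
    fun i => ?_
  rw [durrmeyerWeight_eq]
  ring

end Weights

section Szasz

variable {n : ℕ}

theorem szaszBasis_nonneg (n i : ℕ) {u : ℝ} (hu : 0 ≤ u) : 0 ≤ szaszBasis n i u := by
  unfold szaszBasis
  positivity

theorem continuous_szaszBasis (n i : ℕ) : Continuous (szaszBasis n i) := by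
  unfold szaszBasis
  fun_prop

theorem szaszBasis_mul_pow_eq (n i k : ℕ) (u : ℝ) :
    szaszBasis n i u * u ^ k = (n ^ i / i !) * (u ^ (i + k) * Real.exp (-(n * u))) := by
  rw [szaszBasis, mul_pow, pow_add, neg_mul]
  ring

theorem integrableOn_szaszBasis_mul_pow (hn : 0 < n) (i k : ℕ) :
    IntegrableOn (fun u => szaszBasis n i u * u ^ k) (Ioi 0) := by
  have h := integrableOn_rpow_mul_exp_neg_mul_rpow (s := (i + k : ℕ)) (p := 1) (b := n)
    (by linarith [(Nat.cast_nonneg (i + k) : (0 : ℝ) ≤ _)]) one_pos (by exact_mod_cast hn)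
  simp only [Real.rpow_natCast, Real.rpow_one, neg_mul] at h
  exact IntegrableOn.congr_fun (h.const_mul ((n : ℝ) ^ i / i !))
    (fun u _ => (szaszBasis_mul_pow_eq n i k u).symm) measurableSet_Ioi

theorem integral_szaszBasis_mul_pow (hn : 0 < n) (i k : ℕ) :
    ∫ u in Ioi 0, szaszBasis n i u * u ^ k = (i + k)! / (i ! * (n : ℝ) ^ (k + 1)) := by
  have hN : (0 : ℝ) < n := by exact_mod_cast hn
  have h := Real.integral_rpow_mul_exp_neg_mul_Ioi (a := (i + k : ℕ) + 1) (by positivity) hN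
  rw [add_sub_cancel_right, Real.Gamma_nat_eq_factorial, ← Nat.cast_succ, Real.rpow_natCast,
    one_div, inv_pow] at h
  simp only [Real.rpow_natCast] at h
  simp only [szaszBasis_mul_pow_eq, integral_const_mul, h]
  rw [Nat.succ_eq_add_one, show i + k + 1 = i + (k + 1) by ring, pow_add]
  field_simp

theorem integrableOn_szaszBasis (hn : 0 < n) (i : ℕ) : IntegrableOn (szaszBasis n i) (Ioi 0) := by
  simpa using integrableOn_szaszBasis_mul_pow hn i 0

theorem integral_szaszBasis (hn : 0 < n) (i : ℕ) : ∫ u in Ioi 0, szaszBasis n i u = 1 / n := by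
  have hN : (0 : ℝ) < n := by exact_mod_cast hn
  simpa [field] using integral_szaszBasis_mul_pow hn i 0

theorem integral_szaszBasis_mul_id (hn : 0 < n) (i : ℕ) :
    ∫ u in Ioi 0, szaszBasis n i u * u = (i + 1) / n ^ 2 := by
  have hN : (0 : ℝ) < n := by exact_mod_cast hn
  simpa [Nat.factorial_succ, field] using integral_szaszBasis_mul_pow hn i 1

theorem integral_szaszBasis_mul_sq (hn : 0 < n) (i : ℕ) :
    ∫ u in Ioi 0, szaszBasis n i u * u ^ 2 = (i + 1) * (i + 2) / n ^ 3 := by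
  have hN : (0 : ℝ) < n := by exact_mod_cast hn
  rw [integral_szaszBasis_mul_pow hn i 2, Nat.factorial_succ, Nat.factorial_succ]
  push_cast
  field_simp
  ring

theorem integrableOn_szaszBasis_mul_one_add_sq (hn : 0 < n) (i : ℕ) :
    IntegrableOn (fun u => szaszBasis n i u * (1 + u ^ 2)) (Ioi 0) := by
  simp_rw [mul_add, mul_one]
  exact (integrableOn_szaszBasis hn i).add (integrableOn_szaszBasis_mul_pow hn i 2)

theorem integral_szaszBasis_mul_one_add_sq (hn : 0 < n) (i : ℕ) :
    ∫ u in Ioi (0 : ℝ), szaszBasis n i u * (1 + u ^ 2) =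
      (1 / n + (i + 1) * (i + 2) / n ^ 3 : ℝ) := by
  simp_rw [mul_add, mul_one]
  rw [integral_add (integrableOn_szaszBasis hn i) (integrableOn_szaszBasis_mul_pow hn i 2),
    integral_szaszBasis hn, integral_szaszBasis_mul_sq hn]
  ring

end Szasz

def HasQuadraticGrowth (w : ℝ → ℝ) : Prop :=
  ∃ K, ∀ u ∈ Ioi (0 : ℝ), |w u| ≤ K * (1 + u ^ 2)

theorem hasQuadraticGrowth_of_abs_le {w : ℝ → ℝ} {a b x : ℝ}
    (h : ∀ u ∈ Ioi (0 : ℝ), |w u| ≤ a + b * (u - x) ^ 2) : HasQuadraticGrowth w := by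
  refine ⟨|a| + 2 * |b| * (1 + x ^ 2), fun u hu => (h u hu).trans ?_⟩
  have hux : (u - x) ^ 2 ≤ 2 * (1 + x ^ 2) * (1 + u ^ 2) := by nlinarith [sq_nonneg (u + x)]
  nlinarith [le_abs_self a, le_abs_self b, abs_nonneg a, abs_nonneg b, sq_nonneg u,
    mul_le_mul_of_nonneg_left hux (abs_nonneg b), mul_nonneg (abs_nonneg a) (sq_nonneg u),
    mul_le_mul_of_nonneg_right (le_abs_self b) (sq_nonneg (u - x))]

theorem HasQuadraticGrowth.add {w₁ w₂ : ℝ → ℝ} (h₁ : HasQuadraticGrowth w₁)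
    (h₂ : HasQuadraticGrowth w₂) : HasQuadraticGrowth fun u => w₁ u + w₂ u := by
  obtain ⟨K₁, hK₁⟩ := h₁
  obtain ⟨K₂, hK₂⟩ := h₂
  exact ⟨K₁ + K₂, fun u hu => (abs_add_le _ _).trans (by linarith [hK₁ u hu, hK₂ u hu])⟩

section Operator

variable {n : ℕ} {α x : ℝ} {w k : ℝ → ℝ}

theorem integrableOn_szaszBasis_mul (hn : 0 < n) (hw : ContinuousOn w (Ioi 0))
    (hg : HasQuadraticGrowth w) (i : ℕ) :
    IntegrableOn (fun u => szaszBasis n i u * w u) (Ioi 0) := by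
  obtain ⟨K, hK⟩ := hg
  have hmaj : IntegrableOn (fun u => K * (szaszBasis n i u * (1 + u ^ 2))) (Ioi 0) :=
    (integrableOn_szaszBasis_mul_one_add_sq hn i).const_mul K
  refine hmaj.mono' (((continuous_szaszBasis n i).continuousOn.mul hw).aestronglyMeasurable
    measurableSet_Ioi) ?_
  filter_upwards [ae_restrict_mem measurableSet_Ioi] with u hu
  rw [norm_mul, Real.norm_of_nonneg (szaszBasis_nonneg n i (le_of_lt hu)), Real.norm_eq_abs]
  calc _ ≤ szaszBasis n i u * (K * (1 + u ^ 2)) :=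
        mul_le_mul_of_nonneg_left (hK u hu) (szaszBasis_nonneg n i (le_of_lt hu))
    _ = _ := by ring

theorem abs_integral_szaszBasis_mul_le {i : ℕ}
    (hk : IntegrableOn (fun u => szaszBasis n i u * k u) (Ioi 0))
    (h : ∀ u ∈ Ioi (0 : ℝ), |w u| ≤ k u) :
    |∫ u in Ioi 0, szaszBasis n i u * w u| ≤ ∫ u in Ioi 0, szaszBasis n i u * k u := by
  rw [← Real.norm_eq_abs]
  refine norm_integral_le_of_norm_le hk ?_
  filter_upwards [ae_restrict_mem measurableSet_Ioi] with u hu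
  rw [norm_mul, Real.norm_of_nonneg (szaszBasis_nonneg n i (le_of_lt hu)), Real.norm_eq_abs]
  exact mul_le_mul_of_nonneg_left (h u hu) (szaszBasis_nonneg n i (le_of_lt hu))

theorem summable_durrmeyerWeight_mul_integral (hn : 0 < n) (hα : 0 < α) (hx : 0 ≤ x)
    (hg : HasQuadraticGrowth w) :
    Summable fun i => durrmeyerWeight n α x i * ∫ u in Ioi 0, szaszBasis n i u * w u := by
  obtain ⟨K, hK⟩ := hg
  have hmaj : Summable fun i : ℕ =>
      durrmeyerWeight n α x i * (K * (1 / n + (i + 1) * (i + 2) / n ^ 3)) := by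
    have h := (((summable_sq_mul_durrmeyerWeight hn hα x).add
      (((hasSum_nat_mul_durrmeyerWeight hn hα x).summable.mul_left 3).add
        ((hasSum_durrmeyerWeight hn hα x).summable.mul_left 2))).div_const ((n : ℝ) ^ 3)).add
      ((hasSum_durrmeyerWeight hn hα x).summable.div_const (n : ℝ))
    exact (h.mul_left K).congr fun i => by ring
  refine Summable.of_norm_bounded hmaj fun i => ?_
  have hc := durrmeyerWeight_nonneg (n := n) hα.le hx i
  rw [Real.norm_eq_abs, abs_mul, abs_of_nonneg hc]
  refine mul_le_mul_of_nonneg_left ?_ hc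
  calc _ ≤ ∫ u in Ioi 0, szaszBasis n i u * (K * (1 + u ^ 2)) :=
        abs_integral_szaszBasis_mul_le (IntegrableOn.congr_fun
          ((integrableOn_szaszBasis_mul_one_add_sq hn i).const_mul K) (fun u _ => by ring)
          measurableSet_Ioi) hK
    _ = _ := by
      simp_rw [mul_left_comm _ K]
      rw [integral_const_mul, integral_szaszBasis_mul_one_add_sq hn]

theorem U_add {w₁ w₂ : ℝ → ℝ} (hn : 0 < n) (hα : 0 < α) (hx : 0 ≤ x)
    (hw₁ : ContinuousOn w₁ (Ioi 0)) (hg₁ : HasQuadraticGrowth w₁)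
    (hw₂ : ContinuousOn w₂ (Ioi 0)) (hg₂ : HasQuadraticGrowth w₂) :
    U n α (fun u => w₁ u + w₂ u) x = U n α w₁ x + U n α w₂ x := by
  rw [U_eq_tsum, U_eq_tsum, U_eq_tsum, ← mul_add,
    ← (summable_durrmeyerWeight_mul_integral hn hα hx hg₁).tsum_add
      (summable_durrmeyerWeight_mul_integral hn hα hx hg₂)]
  congr 1
  refine tsum_congr fun i => ?_
  simp only [mul_add]
  rw [integral_add (integrableOn_szaszBasis_mul hn hw₁ hg₁ i)
    (integrableOn_szaszBasis_mul hn hw₂ hg₂ i), mul_add]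

theorem U_const_mul (a : ℝ) : U n α (fun u => a * w u) x = a * U n α w x := by
  simp only [U_eq_tsum, mul_left_comm _ a, integral_const_mul, tsum_mul_left]

theorem U_nonneg (hα : 0 ≤ α) (hx : 0 ≤ x) (h : ∀ u ∈ Ioi (0 : ℝ), 0 ≤ w u) :
    0 ≤ U n α w x :=
  mul_nonneg (Nat.cast_nonneg n) <| tsum_nonneg fun i =>
    mul_nonneg (durrmeyerWeight_nonneg hα hx i) <| setIntegral_nonneg measurableSet_Ioi
      fun u hu => mul_nonneg (szaszBasis_nonneg n i (le_of_lt hu)) (h u hu)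

theorem abs_U_le (hn : 0 < n) (hα : 0 < α) (hx : 0 ≤ x) (hk : ContinuousOn k (Ioi 0))
    (hkg : HasQuadraticGrowth k) (h : ∀ u ∈ Ioi (0 : ℝ), |w u| ≤ k u) :
    |U n α w x| ≤ U n α k x := by
  rw [U_eq_tsum, U_eq_tsum, abs_mul, Nat.abs_cast]
  refine mul_le_mul_of_nonneg_left ?_ (Nat.cast_nonneg n)
  rw [← Real.norm_eq_abs]
  refine tsum_of_norm_bounded (summable_durrmeyerWeight_mul_integral hn hα hx hkg).hasSum
    fun i => ?_
  have hc := durrmeyerWeight_nonneg (n := n) hα.le hx i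
  rw [Real.norm_eq_abs, abs_mul, abs_of_nonneg hc]
  exact mul_le_mul_of_nonneg_left
    (abs_integral_szaszBasis_mul_le (integrableOn_szaszBasis_mul hn hk hkg i) h) hc

theorem U_affine (hn : 0 < n) (hα : 0 < α) (a b : ℝ) :
    U n α (fun u => a + b * (u - x)) x = a + b / n := by
  have hN : (0 : ℝ) < n := by exact_mod_cast hn
  have hI : ∀ i : ℕ, ∫ u in Ioi 0, szaszBasis n i u * (a + b * (u - x)) =
      (a - b * x) * (1 / n) + b * ((i + 1) / n ^ 2) := fun i => by
    rw [← integral_szaszBasis hn i, ← integral_szaszBasis_mul_id hn i, ← integral_const_mul,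
      ← integral_const_mul, ← integral_add ((integrableOn_szaszBasis hn i).const_mul _)
        ((by simpa using integrableOn_szaszBasis_mul_pow hn i 1 :
          IntegrableOn (fun u => szaszBasis n i u * u) (Ioi 0)).const_mul _)]
    congr 1
    funext u
    ring
  have hs := ((hasSum_durrmeyerWeight hn hα x).mul_left ((a - b * x) / n + b / n ^ 2)).add
    ((hasSum_nat_mul_durrmeyerWeight hn hα x).mul_left (b / n ^ 2))
  rw [U_eq_tsum]
  simp_rw [hI]
  rw [(hs.congr_fun fun i => by ring).tsum_eq]
  field_simp
  ring

theorem U_const (hn : 0 < n) (hα : 0 < α) (a : ℝ) : U n α (fun _ => a) x = a := by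
  simpa using U_affine (x := x) hn hα a 0

theorem abs_U_sub_le (hn : 0 < n) (hα : 0 < α) (hx : 0 ≤ x) {f g : ℝ → ℝ} {d W B : ℝ}
    (hf : ContinuousOn f (Ioi 0)) (hg : ContinuousOn g (Ioi 0)) (hfg : ∀ u ∈ Ioi (0 : ℝ), |f u - g u| ≤ W)
    (hR : ∀ u ∈ Ioi (0 : ℝ), |g u - g x - d * (u - x)| ≤ B * (u - x) ^ 2) :
    |U n α f x - (g x + d / n)| ≤ W + B * theta n α 2 x := by
  have hsq : ContinuousOn (fun u => B * (u - x) ^ 2) (Ioi 0) := by fun_prop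
  have hsqg : HasQuadraticGrowth fun u => B * (u - x) ^ 2 :=
    hasQuadraticGrowth_of_abs_le (a := 0) (b := |B|) fun u _ => by
      rw [abs_mul, abs_of_nonneg (sq_nonneg (u - x)), zero_add]
  have hWg : HasQuadraticGrowth fun _ => W :=
    hasQuadraticGrowth_of_abs_le (a := |W|) (b := 0) (x := x) fun u _ => by simp
  have hRg : HasQuadraticGrowth fun u => g u - g x - d * (u - x) :=
    hasQuadraticGrowth_of_abs_le (a := 0) (b := B) fun u hu => by rw [zero_add]; exact hR u hu
  have hAg : HasQuadraticGrowth fun u => g x + d * (u - x) :=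
    hasQuadraticGrowth_of_abs_le (a := |g x| + |d|) (b := |d|) (x := x) fun u _ => by
      refine (abs_add_le _ _).trans ?_
      rw [abs_mul]
      nlinarith [abs_nonneg d, sq_abs (u - x), sq_nonneg (|u - x| - 1)]
  have hsplit : U n α f x = U n α (fun u => f u - g u) x +
      (U n α (fun u => g u - g x - d * (u - x)) x + U n α (fun u => g x + d * (u - x)) x) := by
    rw [← U_add hn hα hx (by fun_prop) hRg (by fun_prop) hAg,
      ← U_add hn hα hx (by fun_prop) (hasQuadraticGrowth_of_abs_le (a := W) (b := 0) (x := x)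
        fun u hu => by simpa using hfg u hu) (by fun_prop) (hRg.add hAg)]
    congr 1
    funext u
    ring
  have hdiff : |U n α (fun u => f u - g u) x| ≤ W := by
    simpa [U_const hn hα] using abs_U_le hn hα hx continuousOn_const hWg hfg
  have hrem : |U n α (fun u => g u - g x - d * (u - x)) x| ≤ B * theta n α 2 x := by
    rw [theta, ← U_const_mul]
    exact abs_U_le hn hα hx hsq hsqg hR
  rw [hsplit, U_affine hn hα, ← add_assoc, add_sub_cancel_right]
  exact (abs_add_le _ _).trans (add_le_add hdiff hrem)

end Operator

def secondDiff (ψ : ℝ → ℝ) (h y : ℝ) : ℝ :=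
  ψ (y + 2 * h) - 2 * ψ (y + h) + ψ y

section Steklov

variable {f F₁ F₂ : ℝ → ℝ}

theorem hasDerivAt_comp_add_mul_add {Φ ψ : ℝ → ℝ} (hΦ : ∀ y, HasDerivAt Φ (ψ y) y)
    (c a b s : ℝ) : HasDerivAt (fun s => Φ (c + a * (s + b))) (a * ψ (c + a * (s + b))) s := by
  have h : HasDerivAt (fun s => c + a * (s + b)) a s := by
    simpa using (((hasDerivAt_id s).add_const b).const_mul a).const_add c
  rw [mul_comm]
  exact (hΦ _).comp s h

theorem integral_integral_secondDiff (hf : Continuous f) (hF₁ : ∀ y, HasDerivAt F₁ (f y) y)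
    (hF₂ : ∀ y, HasDerivAt F₂ (F₁ y) y) (h y : ℝ) :
    ∫ t in (0)..h, ∫ s in (0)..h, secondDiff f (s + t) y =
      h ^ 2 * f y - 2 * secondDiff F₂ h y + secondDiff F₂ (2 * h) y / 4 := by
  have hinner : ∀ t, ∫ s in (0)..h, secondDiff f (s + t) y =
      F₁ (y + 2 * (h + t)) / 2 - 2 * F₁ (y + 1 * (h + t)) + f y * h
        - (F₁ (y + 2 * (0 + t)) / 2 - 2 * F₁ (y + 1 * (0 + t)) + f y * 0) := fun t => by
    have hc : Continuous fun s => secondDiff f (s + t) y := by unfold secondDiff; fun_prop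
    refine intervalIntegral.integral_eq_sub_of_hasDerivAt
      (f := fun s => F₁ (y + 2 * (s + t)) / 2 - 2 * F₁ (y + 1 * (s + t)) + f y * s)
      (fun s _ => ?_) (hc.intervalIntegrable _ _)
    refine ((((hasDerivAt_comp_add_mul_add hF₁ y 2 t s).div_const 2).sub
      ((hasDerivAt_comp_add_mul_add hF₁ y 1 t s).const_mul 2)).add
      ((hasDerivAt_id s).const_mul (f y))).congr_deriv ?_
    simp only [secondDiff, one_mul]
    ring
  have hF₁c : Continuous F₁ := continuous_iff_continuousAt.2 fun y => (hF₁ y).continuousAt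
  rw [intervalIntegral.integral_congr fun t _ => hinner t,
    intervalIntegral.integral_eq_sub_of_hasDerivAt
      (f := fun t => F₂ (y + 2 * (t + h)) / 4 - 2 * F₂ (y + 1 * (t + h)) + f y * h * t
        - (F₂ (y + 2 * (t + 0)) / 4 - 2 * F₂ (y + 1 * (t + 0))))
      (fun t _ => ?_) (Continuous.intervalIntegrable (by fun_prop) _ _)]
  · simp only [secondDiff]
    ring_nf
  · refine ((((hasDerivAt_comp_add_mul_add hF₂ y 2 h t).div_const 4).sub
      ((hasDerivAt_comp_add_mul_add hF₂ y 1 h t).const_mul 2)).add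
      ((hasDerivAt_id t).const_mul (f y * h))).sub
      (((hasDerivAt_comp_add_mul_add hF₂ y 2 0 t).div_const 4).sub
      ((hasDerivAt_comp_add_mul_add hF₂ y 1 0 t).const_mul 2)) |>.congr_deriv ?_
    simp only [one_mul]
    ring_nf

theorem hasDerivAt_secondDiff {ψ ψ' : ℝ → ℝ} (hψ : ∀ y, HasDerivAt ψ (ψ' y) y) (h y : ℝ) :
    HasDerivAt (secondDiff ψ h) (secondDiff ψ' h y) y :=
  (((hψ _).comp_add_const y (2 * h)).sub (((hψ _).comp_add_const y h).const_mul 2)).add (hψ y)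

/-- With `F₂'' = f`, `steklovSmoothing δ F₂ y` is the double Steklov mean
`(4 / δ²) ∫∫_{[0, δ/2]²} (2 f (y + s + t) - f (y + 2s + 2t)) ds dt`. -/
noncomputable def steklovSmoothing (δ : ℝ) (ψ : ℝ → ℝ) (y : ℝ) : ℝ :=
  4 / δ ^ 2 * (2 * secondDiff ψ (δ / 2) y - secondDiff ψ δ y / 4)

theorem hasDerivAt_steklovSmoothing {ψ ψ' : ℝ → ℝ} (hψ : ∀ y, HasDerivAt ψ (ψ' y) y)
    (δ y : ℝ) : HasDerivAt (steklovSmoothing δ ψ) (steklovSmoothing δ ψ' y) y :=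
  (((hasDerivAt_secondDiff hψ (δ / 2) y).const_mul 2).sub
    ((hasDerivAt_secondDiff hψ δ y).div_const 4)).const_mul _

theorem abs_steklovSmoothing_le {δ W y : ℝ} (h₁ : |secondDiff f (δ / 2) y| ≤ W)
    (h₂ : |secondDiff f δ y| ≤ W) : |steklovSmoothing δ f y| ≤ 9 * W / δ ^ 2 := by
  rw [steklovSmoothing, abs_mul, abs_of_nonneg (by positivity)]
  rw [abs_le] at h₁ h₂
  calc _ ≤ 4 / δ ^ 2 * (2 * W + W / 4) := by
        gcongr
        rw [abs_le]
        constructor <;> linarith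
    _ = 9 * W / δ ^ 2 := by ring

theorem abs_sub_steklovSmoothing_le (hf : Continuous f) (hF₁ : ∀ y, HasDerivAt F₁ (f y) y)
    (hF₂ : ∀ y, HasDerivAt F₂ (F₁ y) y) {δ W y : ℝ} (hδ : 0 < δ)
    (hW : ∀ h ∈ Icc 0 δ, |secondDiff f h y| ≤ W) :
    |f y - steklovSmoothing δ F₂ y| ≤ W := by
  have hbound : ‖∫ t in (0)..δ / 2, ∫ s in (0)..δ / 2, secondDiff f (s + t) y‖ ≤
      W * |δ / 2 - 0| * |δ / 2 - 0| := by
    refine intervalIntegral.norm_integral_le_of_norm_le_const fun t ht => ?_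
    refine intervalIntegral.norm_integral_le_of_norm_le_const fun s hs => ?_
    rw [uIoc_of_le (by linarith)] at ht hs
    exact hW _ ⟨by linarith [ht.1, hs.1], by linarith [ht.2, hs.2]⟩
  have hsmooth : f y - steklovSmoothing δ F₂ y =
      4 / δ ^ 2 * ∫ t in (0)..δ / 2, ∫ s in (0)..δ / 2, secondDiff f (s + t) y := by
    rw [integral_integral_secondDiff hf hF₁ hF₂, mul_div_cancel₀ _ two_ne_zero, steklovSmoothing]
    field_simp
    ring
  have hpos : 0 < 4 / δ ^ 2 := by positivity
  rw [hsmooth, abs_mul, abs_of_pos hpos, ← Real.norm_eq_abs]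
  calc _ ≤ 4 / δ ^ 2 * (W * |δ / 2 - 0| * |δ / 2 - 0|) := by gcongr
    _ = W := by
      rw [sub_zero, abs_of_pos (half_pos hδ)]
      field_simp
      ring

end Steklov

theorem exists_smooth_approx_of_abs_secondDiff_le {f : ℝ → ℝ} (hf : ContinuousOn f (Ici 0))
    {δ W : ℝ} (hδ : 0 < δ)
    (hW : ∀ y h, 0 ≤ y → 0 ≤ h → h ≤ δ → |secondDiff f h y| ≤ W) :
    ∃ g g' g'' : ℝ → ℝ, (∀ y, HasDerivAt g (g' y) y) ∧ (∀ y, HasDerivAt g' (g'' y) y) ∧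
      (∀ y, 0 ≤ y → |f y - g y| ≤ W) ∧ ∀ y, 0 ≤ y → |g'' y| ≤ 9 * W / δ ^ 2 := by
  set fe := fun y => f (max y 0)
  have hfe : Continuous fe :=
    hf.comp_continuous (continuous_id.max continuous_const) fun y => le_max_right y 0
  have hfe_eq : ∀ y, 0 ≤ y → fe y = f y := fun y hy => by simp only [fe, max_eq_left hy]
  have hWe : ∀ y h, 0 ≤ y → 0 ≤ h → h ≤ δ → |secondDiff fe h y| ≤ W := fun y h hy hh hhδ => by
    rw [secondDiff, hfe_eq _ hy, hfe_eq _ (by linarith), hfe_eq _ (by linarith)]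
    exact hW y h hy hh hhδ
  set F₁ := fun y => ∫ s in (0)..y, fe s
  have hF₁ : ∀ y, HasDerivAt F₁ (fe y) y := fun y =>
    (hfe.integral_hasStrictDerivAt 0 y).hasDerivAt
  have hF₂ : ∀ y, HasDerivAt (fun y => ∫ s in (0)..y, F₁ s) (F₁ y) y := fun y =>
    ((continuous_iff_continuousAt.2 fun y => (hF₁ y).continuousAt).integral_hasStrictDerivAt
      0 y).hasDerivAt
  refine ⟨_, _, _, hasDerivAt_steklovSmoothing hF₂ δ, hasDerivAt_steklovSmoothing hF₁ δ,
    fun y hy => ?_, fun y hy => ?_⟩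
  · rw [← hfe_eq y hy]
    exact abs_sub_steklovSmoothing_le hfe hF₁ hF₂ hδ fun h hh => hWe y h hy hh.1 hh.2
  · exact abs_steklovSmoothing_le (hWe y _ hy (by linarith) (by linarith)) (hWe y δ hy hδ.le le_rfl)

theorem abs_sub_sub_mul_le_of_abs_deriv2_le {g g' g'' : ℝ → ℝ} {s : Set ℝ} {B a b : ℝ}
    (hs : Convex ℝ s) (hg : ∀ y, HasDerivAt g (g' y) y) (hg' : ∀ y, HasDerivAt g' (g'' y) y)
    (hB : ∀ y ∈ s, |g'' y| ≤ B) (ha : a ∈ s) (hb : b ∈ s) :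
    |g b - g a - g' a * (b - a)| ≤ B * (b - a) ^ 2 := by
  have hseg : uIcc a b ⊆ s := segment_eq_uIcc a b ▸ hs.segment_subset ha hb
  have hB0 : 0 ≤ B := (abs_nonneg _).trans (hB a ha)
  have hlip : ∀ y ∈ uIcc a b, ‖g' y - g' a‖ ≤ B * |b - a| := fun y hy => by
    have h := (convex_uIcc a b).norm_image_sub_le_of_norm_hasDerivWithin_le
      (fun z _ => (hg' z).hasDerivWithinAt) (fun z hz => hB z (hseg hz)) left_mem_uIcc hy
    exact h.trans (mul_le_mul_of_nonneg_left (abs_sub_left_of_mem_uIcc hy) hB0)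
  have h := (convex_uIcc a b).norm_image_sub_le_of_norm_hasDerivWithin_le
    (f := fun u => g u - g' a * u)
    (fun z _ => ((hg z).sub ((hasDerivAt_id z).const_mul (g' a))).hasDerivWithinAt.congr_deriv
      (by simp)) hlip left_mem_uIcc right_mem_uIcc
  rw [Real.norm_eq_abs, Real.norm_eq_abs] at h
  calc |g b - g a - g' a * (b - a)| = |(g b - g' a * b) - (g a - g' a * a)| := by ring_nf
    _ ≤ B * |b - a| * |b - a| := h
    _ = B * (b - a) ^ 2 := by rw [mul_assoc, ← sq, sq_abs]

theorem le_omega1 {f : ℝ → ℝ} {C : ℝ} (hC : ∀ t, 0 ≤ t → |f t| ≤ C) {δ y h : ℝ} (hy : 0 ≤ y)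
    (hh : 0 ≤ h) (hhδ : h ≤ δ) : |f (y + h) - f y| ≤ omega1 f δ := by
  refine le_csSup ⟨2 * C, ?_⟩ ⟨y, h, hy, hh, hhδ, rfl⟩
  rintro _ ⟨z, k, hz, hk, -, rfl⟩
  have h₁ := abs_le.1 (hC (z + k) (by linarith))
  have h₂ := abs_le.1 (hC z hz)
  exact abs_le.2 ⟨by linarith, by linarith⟩

theorem le_omega2 {f : ℝ → ℝ} {C : ℝ} (hC : ∀ t, 0 ≤ t → |f t| ≤ C) {δ y h : ℝ} (hy : 0 ≤ y)
    (hh : 0 ≤ h) (hhδ : h ≤ δ) : |secondDiff f h y| ≤ omega2 f δ := by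
  refine le_csSup ⟨4 * C, ?_⟩ ⟨y, h, hy, hh, hhδ, rfl⟩
  rintro _ ⟨z, k, hz, hk, -, rfl⟩
  have h₁ := abs_le.1 (hC (z + 2 * k) (by linarith))
  have h₂ := abs_le.1 (hC (z + k) (by linarith))
  have h₃ := abs_le.1 (hC z hz)
  exact abs_le.2 ⟨by linarith, by linarith⟩

theorem stmt10 :
    ∃ M : ℝ, 0 < M ∧ ∀ f : ℝ → ℝ, ContinuousOn f (Set.Ici 0) →
      (∃ C : ℝ, ∀ t : ℝ, 0 ≤ t → |f t| ≤ C) →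
      ∀ n : ℕ, 0 < n → ∀ α : ℝ, 0 < α → α ≤ 1 / n → ∀ x : ℝ, 0 ≤ x →
        |U n α f x - f x| ≤
          M * omega2 f (Real.sqrt (theta n α 2 x + 1 / (n : ℝ) ^ 2)) +
            omega1 f (1 / n) := by
  refine ⟨13, by norm_num, fun f hf ⟨C, hC⟩ n hn α hα _ x hx => ?_⟩
  have hθ : 0 ≤ theta n α 2 x := U_nonneg hα.le hx fun u _ => sq_nonneg (u - x)
  set δ := √(theta n α 2 x + 1 / (n : ℝ) ^ 2)
  have hδ : 0 < δ := Real.sqrt_pos.2 (by positivity)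
  have hδ2 : δ ^ 2 = theta n α 2 x + 1 / (n : ℝ) ^ 2 := Real.sq_sqrt (by positivity)
  obtain ⟨g, g', g'', hg, hg', hfg, hg''⟩ := exists_smooth_approx_of_abs_secondDiff_le hf hδ
    fun y h hy hh hhδ => le_omega2 hC hy hh hhδ
  set B := 9 * omega2 f δ / δ ^ 2
  have hBδ : B * theta n α 2 x + B / n ^ 2 = 9 * omega2 f δ := by
    rw [div_eq_mul_one_div B, ← mul_add, ← hδ2]
    exact div_mul_cancel₀ _ (pow_ne_zero 2 hδ.ne')
  have htaylor : ∀ u ∈ Ici (0 : ℝ), |g u - g x - g' x * (u - x)| ≤ B * (u - x) ^ 2 :=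
    fun u hu => abs_sub_sub_mul_le_of_abs_deriv2_le (convex_Ici 0) hg hg' hg'' hx hu
  have hU := abs_U_sub_le hn hα hx (hf.mono Ioi_subset_Ici_self)
    (fun y _ => (hg y).continuousAt.continuousWithinAt) (fun u hu => hfg u (le_of_lt hu))
    (fun u hu => htaylor u (Ioi_subset_Ici_self hu))
  have hstep := htaylor (x + 1 / n) (mem_Ici.2 (by positivity))
  have hjump := le_omega1 hC hx (by positivity : (0 : ℝ) ≤ 1 / n) le_rfl
  have hfg₁ := hfg (x + 1 / n) (by positivity)
  have hfg₀ := hfg x hx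
  rw [add_sub_cancel_left, div_pow, one_pow, ← div_eq_mul_one_div, mul_one_div] at hstep
  rw [abs_le] at hU hstep hjump hfg₁ hfg₀ ⊢
  constructor <;> linarith
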